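/- Let a, b, c be real with a + b = c, a, b > 0. Then as x → 1⁻, ₂F₁(a, b; a+b; x) ∼ −(Γ(a+b)/(Γ(a)Γ(b))) log(1−x), i.e. the limit of ₂F₁(a,b;a+b;x) / (−log(1−x)) as x → 1⁻ equals Γ(a+b)/(Γ(a)Γ(b)). -/

import Mathlib

open Real Filter

/-- Ascending factorial (Pochhammer symbol). -/
noncomputable def asc (u : ℝ) (j : ℕ) : ℝ := ∏ i ∈ Finset.range j, (u + i)

/-- Gaussian hypergeometric function (power series). -/
noncomputable def hyp2F1 (a b c x : ℝ) : ℝ :=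
  ∑' j : ℕ, asc a j * asc b j / (asc c j * (Nat.factorial j : ℝ)) * x ^ j

/-!
Write `₂F₁(a, b; a + b; x) = ∑ cₙ xⁿ` and `-log (1 - x) = ∑ xⁿ / n`. Euler's limit formula
`Γ(s) = lim n^s n! / (s (s + 1) ⋯ (s + n))` gives `n cₙ → Γ(a + b) / (Γ(a) Γ(b))`, so the
coefficients of the two series are asymptotically proportional. Since the second series diverges
as `x → 1⁻`, any finite set of coefficients is negligible there, and the ratio of the two sums
tends to the same constant.
-/

open Topology Finset Asymptotics

lemma summable_and_abs_tsum_mul_pow_le {e d : ℕ → ℝ} {ε : ℝ} {N : ℕ} (hε : 0 ≤ ε)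
    (hd : ∀ n, 0 ≤ d n) (he : ∀ n, N ≤ n → |e n| ≤ ε * d n) {x : ℝ} (hx0 : 0 ≤ x)
    (hx1 : x ≤ 1) (hdx : Summable fun n => d n * x ^ n) :
    (Summable fun n => e n * x ^ n) ∧
      |∑' n, e n * x ^ n| ≤ ∑ n ∈ range N, |e n| + ε * ∑' n, d n * x ^ n := by
  set head : ℕ → ℝ := fun n => if n < N then |e n| else 0
  have hhead : HasSum head (∑ n ∈ range N, |e n|) := by
    rw [← sum_congr rfl fun n hn => if_pos (mem_range.1 hn)]
    exact hasSum_sum_of_ne_finset_zero fun n hn => if_neg (by simpa using hn)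
  have hbound : ∀ n, ‖e n * x ^ n‖ ≤ head n + ε * (d n * x ^ n) := by
    intro n
    have hxn : 0 ≤ x ^ n := pow_nonneg hx0 n
    rw [Real.norm_eq_abs, abs_mul, abs_of_nonneg hxn]
    by_cases hn : n < N
    · simp only [head, if_pos hn]
      nlinarith [abs_nonneg (e n), hd n, pow_le_one₀ hx0 hx1 (n := n), mul_nonneg hε (hd n)]
    · simp only [head, if_neg hn, zero_add]
      calc |e n| * x ^ n ≤ ε * d n * x ^ n := by gcongr; exact he n (not_lt.1 hn)
        _ = ε * (d n * x ^ n) := by ring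
  have hsum := hhead.add (hdx.hasSum.mul_left ε)
  exact ⟨.of_norm_bounded hsum.summable hbound, tsum_of_norm_bounded hsum hbound⟩

theorem tendsto_tsum_mul_pow_div_tsum_mul_pow {c d : ℕ → ℝ} {K : ℝ} (hd : ∀ n, 0 ≤ d n)
    (hdsum : ∀ x ∈ Set.Ioo (0 : ℝ) 1, Summable fun n => d n * x ^ n)
    (hdtop : Tendsto (fun x => ∑' n, d n * x ^ n) (𝓝[<] 1) atTop)
    (hcd : (fun n => c n - K * d n) =o[atTop] d) :
    Tendsto (fun x => (∑' n, c n * x ^ n) / ∑' n, d n * x ^ n) (𝓝[<] 1) (𝓝 K) := by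
  set e := fun n => c n - K * d n
  rw [Metric.tendsto_nhds]
  intro ε hε
  obtain ⟨N, hN⟩ : ∃ N, ∀ n, N ≤ n → |e n| ≤ ε / 2 * d n := by
    simpa [Real.norm_eq_abs, abs_of_nonneg (hd _)] using
      eventually_atTop.1 (hcd.def (half_pos hε))
  set C := ∑ n ∈ range N, |e n|
  filter_upwards [Ioo_mem_nhdsLT zero_lt_one, hdtop.eventually_gt_atTop 0,
    (hdtop.const_div_atTop C).eventually (gt_mem_nhds (half_pos hε))] with x hx hg hCg
  set g := ∑' n, d n * x ^ n
  obtain ⟨hes, hle⟩ := summable_and_abs_tsum_mul_pow_le (half_pos hε).le hd hN hx.1.le hx.2.le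
    (hdsum x hx)
  have hsplit : ∑' n, c n * x ^ n = ∑' n, e n * x ^ n + K * g := by
    rw [← tsum_mul_left, ← hes.tsum_add ((hdsum x hx).mul_left K)]
    congr 1 with n
    ring
  rw [Real.dist_eq, hsplit]
  calc |(∑' n, e n * x ^ n + K * g) / g - K| = |∑' n, e n * x ^ n| / g := by
        rw [add_div, mul_div_cancel_right₀ _ hg.ne', add_sub_cancel_right, abs_div, abs_of_pos hg]
    _ ≤ (C + ε / 2 * g) / g := by gcongr
    _ = C / g + ε / 2 := by field_simp
    _ < ε := by linarith

lemma isLittleO_sub_mul_inv_natCast {c : ℕ → ℝ} {K : ℝ}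
    (hc : Tendsto (fun n => n * c n) atTop (𝓝 K)) :
    (fun n => c n - K * (n : ℝ)⁻¹) =o[atTop] fun n => (n : ℝ)⁻¹ := by
  rw [isLittleO_iff_tendsto']
  · have h := hc.sub_const K
    rw [sub_self] at h
    refine h.congr' ?_
    filter_upwards [eventually_ge_atTop 1] with n hn
    have : (n : ℝ) ≠ 0 := by positivity
    field_simp
  · filter_upwards [eventually_ge_atTop 1] with n hn h
    exact absurd h (by positivity)

-- The `n = 0` term is `0⁻¹ * 1 = 0`, so the series may start at `0`.
lemma hasSum_inv_natCast_mul_pow {x : ℝ} (h : |x| < 1) :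
    HasSum (fun n : ℕ => (n : ℝ)⁻¹ * x ^ n) (-log (1 - x)) := by
  rw [← hasSum_nat_add_iff' 1]
  simpa [div_eq_inv_mul] using hasSum_pow_div_log_of_abs_lt_one h

lemma tendsto_neg_log_one_sub_nhdsLT_one :
    Tendsto (fun x : ℝ => -log (1 - x)) (𝓝[<] 1) atTop := by
  have h : Tendsto (fun x : ℝ => 1 - x) (𝓝[<] 1) (𝓝[>] 0) := by
    refine tendsto_nhdsWithin_of_tendsto_nhds_of_eventually_within _ ?_ ?_
    · simpa using ((continuous_sub_left (1 : ℝ)).tendsto 1).mono_left nhdsWithin_le_nhds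
    · filter_upwards [self_mem_nhdsWithin] with x hx
      exact sub_pos.2 (Set.mem_Iio.1 hx)
  exact tendsto_neg_atBot_atTop.comp (tendsto_log_nhdsGT_zero.comp h)

noncomputable def hyp2F1Coeff (a b c : ℝ) (n : ℕ) : ℝ :=
  asc a n * asc b n / (asc c n * (Nat.factorial n : ℝ))

lemma hyp2F1_eq_tsum (a b c x : ℝ) : hyp2F1 a b c x = ∑' n, hyp2F1Coeff a b c n * x ^ n := rfl

lemma asc_pos {u : ℝ} (hu : 0 < u) (n : ℕ) : 0 < asc u n :=
  prod_pos fun i _ => by positivity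

lemma GammaSeq_eq_div_asc (s : ℝ) (n : ℕ) :
    GammaSeq s n = n ^ s * (Nat.factorial n : ℝ) / asc s (n + 1) := rfl

lemma succ_mul_hyp2F1Coeff_succ {a b : ℝ} (ha : 0 < a) (hb : 0 < b) {n : ℕ} (hn : 1 ≤ n) :
    (n + 1) * hyp2F1Coeff a b (a + b) (n + 1) =
      GammaSeq (a + b) n / (GammaSeq a n * GammaSeq b n) := by
  have hn0 : (0 : ℝ) < n := by exact_mod_cast hn
  have := (asc_pos ha (n + 1)).ne'
  have := (asc_pos hb (n + 1)).ne'
  have := (asc_pos (add_pos ha hb) (n + 1)).ne'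
  have := (rpow_pos_of_pos hn0 a).ne'
  have := (rpow_pos_of_pos hn0 b).ne'
  rw [GammaSeq_eq_div_asc, GammaSeq_eq_div_asc, GammaSeq_eq_div_asc, hyp2F1Coeff, rpow_add hn0,
    Nat.factorial_succ]
  push_cast
  field_simp

lemma tendsto_natCast_mul_hyp2F1Coeff {a b : ℝ} (ha : 0 < a) (hb : 0 < b) :
    Tendsto (fun n : ℕ => n * hyp2F1Coeff a b (a + b) n) atTop
      (𝓝 (Gamma (a + b) / (Gamma a * Gamma b))) := by
  have hΓ : Gamma a * Gamma b ≠ 0 := (mul_pos (Gamma_pos_of_pos ha) (Gamma_pos_of_pos hb)).ne'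
  have h := (GammaSeq_tendsto_Gamma (a + b)).div
    ((GammaSeq_tendsto_Gamma a).mul (GammaSeq_tendsto_Gamma b)) hΓ
  rw [← tendsto_add_atTop_iff_nat 1]
  refine h.congr' ?_
  filter_upwards [eventually_ge_atTop 1] with n hn
  push_cast
  exact (succ_mul_hyp2F1Coeff_succ ha hb hn).symm

theorem hyp2F1_log_asymptotic (a b : ℝ) (ha : 0 < a) (hb : 0 < b) :
    Tendsto (fun x => hyp2F1 a b (a+b) x / (-Real.log (1-x)))
      (nhdsWithin 1 (Set.Iio 1)) (nhds (Real.Gamma (a+b) / (Real.Gamma a * Real.Gamma b))) := by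
  have hlog : ∀ x ∈ Set.Ioo (-1 : ℝ) 1,
      HasSum (fun n : ℕ => (n : ℝ)⁻¹ * x ^ n) (-log (1 - x)) :=
    fun x hx => hasSum_inv_natCast_mul_pow (abs_lt.2 hx)
  have hnear : Set.Ioo (-1 : ℝ) 1 ∈ 𝓝[<] 1 := Ioo_mem_nhdsLT (by norm_num)
  have hlogtop : Tendsto (fun x => ∑' n : ℕ, (n : ℝ)⁻¹ * x ^ n) (𝓝[<] 1) atTop :=
    tendsto_neg_log_one_sub_nhdsLT_one.congr' <| by
      filter_upwards [hnear] with x hx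
      exact (hlog x hx).tsum_eq.symm
  refine (tendsto_tsum_mul_pow_div_tsum_mul_pow (fun n => by positivity)
    (fun x hx => (hlog x ⟨by linarith [hx.1], hx.2⟩).summable) hlogtop
    (isLittleO_sub_mul_inv_natCast (tendsto_natCast_mul_hyp2F1Coeff ha hb))).congr' ?_
  filter_upwards [hnear] with x hx
  rw [hyp2F1_eq_tsum, (hlog x hx).tsum_eq]
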